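/- Suppose additionally y ∈ A and λ ∈ F satisfy hy − yh = λy. Then for every s ≥ 1, in A[[t]]: v · y^s · u = (1−et)^{−sλ} · Σ_{ℓ≥0} d^{(ℓ)}(y^s) · h_{1}^{⟨ℓ⟩} · t^ℓ, where u := u_0 and v := v_0 = u⁻¹; equivalently, the twisted antipode satisfies S(y^s) = (−1)^s (1−et)^{−sλ} Σ_{ℓ≥0} d^{(ℓ)}(y^s) h_1^{⟨ℓ⟩} t^ℓ. (This is identity (3.13) of the paper's Lemma 3.4, proved in U(𝐊)[[t]] for y = D_K(x^α), λ = α_k − α_{−k}; only the stated commutation relations are used.) -/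

import Mathlib

/-- Falling factorial `x_a^{[m]} := (x+a)(x+a-1)⋯(x+a-m+1)` in an `F`-algebra `A`. -/
def fallPow {F A : Type*} [Field F] [Ring A] [Algebra F A] (x : A) (a : F) : ℕ → A
  | 0 => 1
  | m + 1 => fallPow x a m * (x + algebraMap F A (a - (m : F)))

/-- Rising factorial `x_a^{⟨m⟩} := (x+a)(x+a+1)⋯(x+a+m-1)` in an `F`-algebra `A`. -/
def risePow {F A : Type*} [Field F] [Ring A] [Algebra F A] (x : A) (a : F) : ℕ → A
  | 0 => 1
  | m + 1 => risePow x a m * (x + algebraMap F A (a + (m : F)))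

/-- Scalar rising factorial `c^{⟨m⟩} = c(c+1)⋯(c+m-1)` in `F`. -/
def riseC {F : Type*} [Field F] (c : F) (m : ℕ) : F :=
  ∏ i ∈ Finset.range m, (c + (i : F))

/-- `(1−et)^{−c} = Σ_{r≥0} (1/r!) c^{⟨r⟩} e^r t^r ∈ A[[t]]`. -/
noncomputable def oneSubEtNegPow {F A : Type*} [Field F] [Ring A] [Algebra F A]
    (e : A) (c : F) : PowerSeries A :=
  PowerSeries.mk fun r => (((r.factorial : F))⁻¹ * riseC c r) • e ^ r

/-- `u_a = Σ_{r≥0} ((−1)^r/r!) h_{−a}^{[r]} e^r t^r ∈ A[[t]]`. -/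
noncomputable def uSer {F A : Type*} [Field F] [Ring A] [Algebra F A] (h e : A) (a : F) :
    PowerSeries A :=
  PowerSeries.mk fun r => ((-1 : F) ^ r / (r.factorial : F)) • (fallPow h (-a) r * e ^ r)

/-- `v_a = Σ_{r≥0} (1/r!) h_a^{[r]} e^r t^r ∈ A[[t]]`. -/
noncomputable def vSer {F A : Type*} [Field F] [Ring A] [Algebra F A] (h e : A) (a : F) :
    PowerSeries A :=
  PowerSeries.mk fun r => ((r.factorial : F))⁻¹ • (fallPow h a r * e ^ r)

/-- The divided power `d^{(ℓ)} = (1/ℓ!)(ad e)^ℓ` of the inner derivation `ad e`. -/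
def dPow (F : Type*) {A : Type*} [Field F] [Ring A] [Algebra F A]
    (e : A) (ℓ : ℕ) (x : A) : A :=
  ((ℓ.factorial : F))⁻¹ • ((fun z => e * z - z * e)^[ℓ] x)

/-!
Write `c = h e`. Since `e h = (h - 1) e`, one has `h_0^{[r]} e^r = c^r`, so `v = exp(t c)` and
`u = exp(-t c)`, and the left side `X` solves `X' = [c, X]` with `X(0) = y^s`. The right side
solves the same equation: with `μ = sλ` the weight of `y^s`, `[c, e^r] = r e^{r+1}` gives
`B' = [c, B] + μ e B` for `B = (1 - e t)^{-μ}`, while the facts that `ad e` raises the `ad h`-weight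
by one and that `h_1^{⟨ℓ⟩} c = e h_1^{⟨ℓ+1⟩}` give `S' = [c, S] - μ e S` for the second factor `S`.
In characteristic zero this equation determines a power series from its constant term.
-/

open PowerSeries

section Factorials

variable {F A : Type*} [Field F] [Ring A] [Algebra F A]

theorem commute_risePow (x : A) (a : F) (m : ℕ) : Commute x (risePow x a m) := by
  induction m with
  | zero => exact Commute.one_right x
  | succ m ih =>
    exact ih.mul_right ((Commute.refl x).add_right (Algebra.commute_algebraMap_right _ _))

theorem fallPow_succ_left (x : A) (a : F) (m : ℕ) :
    fallPow x a (m + 1) = (x + algebraMap F A a) * fallPow x (a - 1) m := by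
  induction m with
  | zero => simp [fallPow]
  | succ m ih =>
    rw [fallPow, ih, mul_assoc, fallPow]
    congr 4
    push_cast
    ring

theorem risePow_succ_left (x : A) (a : F) (m : ℕ) :
    risePow x a (m + 1) = (x + algebraMap F A a) * risePow x (a + 1) m := by
  induction m with
  | zero => simp [risePow]
  | succ m ih =>
    rw [risePow, ih, mul_assoc, risePow]
    congr 4
    push_cast
    ring

end Factorials

section Weights

variable {F A : Type*} [Field F] [Ring A] [Algebra F A]

def HasWeight (h : A) (a : F) (x : A) : Prop := h * x - x * h = a • x

variable {h x y : A} {a b : F}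

theorem HasWeight.mul_eq (hx : HasWeight h a x) : h * x = x * h + a • x :=
  sub_eq_iff_eq_add'.mp hx

theorem HasWeight.mul (hx : HasWeight h a x) (hy : HasWeight h b y) :
    HasWeight h (a + b) (x * y) := by
  rw [HasWeight, show h * (x * y) - x * y * h = (h * x - x * h) * y + x * (h * y - y * h) by
    noncomm_ring, hx, hy, smul_mul_assoc, mul_smul_comm, add_smul]

theorem HasWeight.pow (hx : HasWeight h a x) (n : ℕ) : HasWeight h (n * a) (x ^ n) := by
  induction n with
  | zero => simp [HasWeight]
  | succ n ih => simpa [pow_succ, add_one_mul] using ih.mul hx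

theorem HasWeight.smul (hx : HasWeight h a x) (c : F) : HasWeight h a (c • x) := by
  rw [HasWeight, mul_smul_comm, smul_mul_assoc, ← smul_sub, hx, smul_comm]

theorem HasWeight.commutator {e : A} (he : HasWeight h (1 : F) e) (hx : HasWeight h a x) :
    HasWeight h (a + 1) (e * x - x * e) := by
  have hex : HasWeight h (a + 1) (e * x) := add_comm (1 : F) a ▸ he.mul hx
  rw [HasWeight, show h * (e * x - x * e) - (e * x - x * e) * h
      = (h * (e * x) - e * x * h) - (h * (x * e) - x * e * h) by noncomm_ring,
    (hex : _ = _), (hx.mul he : _ = _), smul_sub]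

theorem HasWeight.dPow {e : A} (he : HasWeight h (1 : F) e) (hx : HasWeight h a x)
    (ℓ : ℕ) : HasWeight h (a + ℓ) (dPow F e ℓ x) := by
  suffices HasWeight h (a + ℓ) ((fun z => e * z - z * e)^[ℓ] x) from this.smul _
  induction ℓ with
  | zero => simpa using hx
  | succ ℓ ih =>
    rw [Function.iterate_succ_apply', Nat.cast_succ, ← add_assoc]
    exact he.commutator ih

end Weights

theorem add_one_mul_inv_factorial_succ {F : Type*} [Field F] [CharZero F] (n : ℕ) :
    ((n : F) + 1) * ((n + 1).factorial : F)⁻¹ = (n.factorial : F)⁻¹ := by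
  rw [Nat.factorial_succ, Nat.cast_mul, Nat.cast_succ, mul_inv, ← mul_assoc,
    mul_inv_cancel₀ (Nat.cast_add_one_ne_zero n), one_mul]

theorem mul_dPow_sub_dPow_mul {F A : Type*} [Field F] [CharZero F] [Ring A] [Algebra F A]
    (e z : A) (ℓ : ℕ) :
    e * dPow F e ℓ z - dPow F e ℓ z * e = ((ℓ : F) + 1) • dPow F e (ℓ + 1) z := by
  rw [dPow, dPow, Function.iterate_succ_apply', mul_smul_comm, smul_mul_assoc, ← smul_sub,
    smul_smul, add_one_mul_inv_factorial_succ]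

section Ladder

variable {F A : Type*} [Field F] [Ring A] [Algebra F A] {h e : A} (he : h * e - e * h = e)
include he

theorem hasWeight_one_of_mul_sub_mul_eq_self : HasWeight h (1 : F) e := by
  rw [HasWeight, he, one_smul]

theorem h_add_algebraMap_mul_e (c : F) :
    (h + algebraMap F A c) * e = e * (h + algebraMap F A (c + 1)) := by
  rw [map_add, map_one, mul_add, mul_add, mul_one, add_mul, Algebra.commutes,
    (hasWeight_one_of_mul_sub_mul_eq_self (F := F) he).mul_eq, one_smul]
  abel

theorem fallPow_mul_e (a : F) (m : ℕ) : fallPow h a m * e = e * fallPow h (a + 1) m := by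
  induction m with
  | zero => simp [fallPow]
  | succ m ih =>
    rw [fallPow, mul_assoc, h_add_algebraMap_mul_e he, ← mul_assoc, ih, mul_assoc, fallPow,
      sub_add_eq_add_sub]

theorem risePow_mul_e (a : F) (m : ℕ) : risePow h a m * e = e * risePow h (a + 1) m := by
  induction m with
  | zero => simp [risePow]
  | succ m ih =>
    rw [risePow, mul_assoc, h_add_algebraMap_mul_e he, ← mul_assoc, ih, mul_assoc, risePow,
      add_right_comm]

theorem fallPow_zero_mul_pow (n : ℕ) : fallPow h (0 : F) n * e ^ n = (h * e) ^ n := by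
  induction n with
  | zero => simp [fallPow]
  | succ n ih =>
    rw [fallPow_succ_left, map_zero, add_zero, pow_succ', mul_assoc, ← mul_assoc _ e,
      fallPow_mul_e he, zero_sub, neg_add_cancel, mul_assoc, ih, ← mul_assoc, pow_succ']

theorem risePow_one_mul_h_mul_e (ℓ : ℕ) :
    risePow h (1 : F) ℓ * (h * e) = e * risePow h (1 : F) (ℓ + 1) := by
  rw [← mul_assoc, ← (commute_risePow h (1 : F) ℓ).eq, mul_assoc, risePow_mul_e he,
    ← mul_assoc, (hasWeight_one_of_mul_sub_mul_eq_self (F := F) he).mul_eq, one_smul,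
    ← mul_add_one, mul_assoc, risePow_succ_left, map_one]

theorem h_mul_e_mul_pow_sub (n : ℕ) :
    h * e * e ^ n - e ^ n * (h * e) = (n : F) • e ^ (n + 1) := by
  have hw := hasWeight_one_of_mul_sub_mul_eq_self (F := F) he
  rw [mul_assoc, ← pow_succ', (hw.pow (n + 1)).mul_eq, hw.mul_eq, mul_add, ← mul_assoc,
    ← pow_succ, one_smul, Nat.cast_succ, mul_one, add_smul, one_smul, ← pow_succ]
  abel

end Ladder

namespace PowerSeries

variable {R : Type*}

/-- The formal derivative; unlike `PowerSeries.derivative`, it needs no commutativity. -/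
noncomputable def ncDerivative [Semiring R] (f : R⟦X⟧) : R⟦X⟧ :=
  mk fun n => (n + 1) • coeff (n + 1) f

theorem coeff_ncDerivative [Semiring R] (f : R⟦X⟧) (n : ℕ) :
    coeff n (ncDerivative f) = (n + 1) • coeff (n + 1) f :=
  coeff_mk _ _

theorem ncDerivative_C [Semiring R] (a : R) : ncDerivative (C a) = 0 := by
  ext n
  simp [coeff_ncDerivative]

theorem ncDerivative_mul [Semiring R] (f g : R⟦X⟧) :
    ncDerivative (f * g) = ncDerivative f * g + f * ncDerivative g := by
  ext n
  have hsplit : ∀ p ∈ Finset.HasAntidiagonal.antidiagonal (n + 1),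
      (n + 1) • (coeff p.1 f * coeff p.2 g)
        = p.1 • (coeff p.1 f * coeff p.2 g) + p.2 • (coeff p.1 f * coeff p.2 g) := by
    intro p hp
    rw [← add_smul, Finset.HasAntidiagonal.mem_antidiagonal.mp hp]
  rw [map_add, coeff_ncDerivative, coeff_mul, coeff_mul, coeff_mul, Finset.smul_sum,
    Finset.sum_congr rfl hsplit, Finset.sum_add_distrib, Finset.Nat.sum_antidiagonal_succ,
    Finset.Nat.sum_antidiagonal_succ']
  simp only [coeff_ncDerivative, zero_smul, zero_add, smul_mul_assoc, mul_smul_comm]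

theorem eq_of_ncDerivative_eq_commutator [Ring R] [IsAddTorsionFree R] {c : R} {f g : R⟦X⟧}
    (hf : ncDerivative f = C c * f - f * C c) (hg : ncDerivative g = C c * g - g * C c)
    (h0 : constantCoeff f = constantCoeff g) : f = g := by
  ext n
  induction n with
  | zero => simpa using h0
  | succ n ih =>
    have hfn := congrArg (coeff n) hf
    have hgn := congrArg (coeff n) hg
    simp only [coeff_ncDerivative, map_sub, coeff_C_mul, coeff_mul_C, ih] at hfn hgn
    exact nsmul_right_injective n.succ_ne_zero (hfn.trans hgn.symm)

end PowerSeries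

theorem C_mul_oneSubEtNegPow {F A : Type*} [Field F] [Ring A] [Algebra F A] (e : A) (μ : F) :
    C e * oneSubEtNegPow e μ = oneSubEtNegPow e μ * C e := by
  ext n
  rw [coeff_C_mul, coeff_mul_C, oneSubEtNegPow, coeff_mk, mul_smul_comm, smul_mul_assoc,
    ← pow_succ, ← pow_succ']

section Series

variable {F A : Type*} [Field F] [CharZero F] [Ring A] [Algebra F A] {h e : A}
  (he : h * e - e * h = e)
include he

theorem ncDerivative_vSer : ncDerivative (vSer h e (0 : F)) = C (h * e) * vSer h e (0 : F) := by
  ext n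
  rw [coeff_ncDerivative, coeff_C_mul, vSer, coeff_mk, coeff_mk, fallPow_zero_mul_pow he,
    fallPow_zero_mul_pow he, ← Nat.cast_smul_eq_nsmul F, smul_smul, Nat.cast_succ,
    add_one_mul_inv_factorial_succ, pow_succ', mul_smul_comm]

theorem ncDerivative_uSer : ncDerivative (uSer h e (0 : F)) = -(uSer h e (0 : F) * C (h * e)) := by
  ext n
  rw [coeff_ncDerivative, map_neg, coeff_mul_C, uSer, coeff_mk, coeff_mk, neg_zero,
    fallPow_zero_mul_pow he, fallPow_zero_mul_pow he, ← Nat.cast_smul_eq_nsmul F, smul_smul,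
    smul_mul_assoc, ← pow_succ, ← neg_smul, pow_succ, div_eq_mul_inv, div_eq_mul_inv,
    mul_left_comm, Nat.cast_succ, add_one_mul_inv_factorial_succ]
  congr 1
  ring

theorem ncDerivative_oneSubEtNegPow (μ : F) :
    ncDerivative (oneSubEtNegPow e μ) = C (h * e) * oneSubEtNegPow e μ
      - oneSubEtNegPow e μ * C (h * e) + μ • (C e * oneSubEtNegPow e μ) := by
  ext n
  rw [coeff_ncDerivative, map_add, map_sub, coeff_C_mul, coeff_mul_C, coeff_smul, coeff_C_mul,
    oneSubEtNegPow, coeff_mk, coeff_mk, mul_smul_comm, smul_mul_assoc, mul_smul_comm, ← smul_sub,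
    h_mul_e_mul_pow_sub (F := F) he, ← pow_succ', smul_smul, smul_smul, ← add_smul,
    ← Nat.cast_smul_eq_nsmul F, smul_smul, Nat.cast_succ, ← mul_assoc,
    add_one_mul_inv_factorial_succ, riseC, riseC, Finset.prod_range_succ]
  congr 1
  ring

theorem h_mul_e_mul_dPow_mul_risePow {z : A} {μ : F} (hz : HasWeight h μ z) (ℓ : ℕ) :
    h * e * (dPow F e ℓ z * risePow h (1 : F) ℓ) - dPow F e ℓ z * risePow h (1 : F) ℓ * (h * e)
      = μ • (e * (dPow F e ℓ z * risePow h (1 : F) ℓ))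
        + ((ℓ : F) + 1) • (dPow F e (ℓ + 1) z * risePow h (1 : F) (ℓ + 1)) := by
  have hw := hasWeight_one_of_mul_sub_mul_eq_self (F := F) he
  have hhe := hw.mul_eq
  have hd := (hw.dPow hz ℓ).mul_eq
  have hd' := (hw.dPow hz (ℓ + 1)).mul_eq
  have hed : e * dPow F e ℓ z = dPow F e ℓ z * e + ((ℓ : F) + 1) • dPow F e (ℓ + 1) z := by
    rw [← mul_dPow_sub_dPow_mul]; abel
  have hr : h * risePow h (1 : F) ℓ = risePow h (1 : F) ℓ * h := commute_risePow h (1 : F) ℓ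
  have hrhe := risePow_one_mul_h_mul_e (F := F) he ℓ
  have hr' : risePow h (1 : F) (ℓ + 1)
      = risePow h (1 : F) ℓ * h + (1 + (ℓ : F)) • risePow h (1 : F) ℓ := by
    rw [risePow, mul_add, ← Algebra.commutes, ← Algebra.smul_def]
  rw [one_smul] at hhe
  generalize dPow F e ℓ z = d, dPow F e (ℓ + 1) z = d', risePow h (1 : F) ℓ = r,
    risePow h (1 : F) (ℓ + 1) = r' at *
  have lhs : h * e * (d * r) = d * e * r * h + (μ + ℓ + 1) • (d * e * r)
      + ((ℓ : F) + 1) • (d' * r * h) + (((ℓ : F) + 1) * (μ + ↑(ℓ + 1))) • (d' * r) :=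
    calc h * e * (d * r) = (h * d) * e * r + ((ℓ : F) + 1) • ((h * d') * r) := by
          rw [mul_assoc h, ← mul_assoc e, hed]
          simp only [mul_add, add_mul, mul_smul_comm, smul_mul_assoc, mul_assoc]
      _ = d * (h * e) * r + (μ + ℓ) • (d * e * r) + ((ℓ : F) + 1) • (d' * (h * r))
          + (((ℓ : F) + 1) * (μ + ↑(ℓ + 1))) • (d' * r) := by
          rw [hd, hd']
          simp only [add_mul, smul_mul_assoc, mul_assoc, smul_add, smul_smul]
          abel
      _ = _ := by
          rw [hhe]
          simp only [mul_add, add_mul, mul_assoc, hr]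
          module
  rw [mul_assoc d, hrhe, ← mul_assoc e, hed, lhs, hr']
  simp only [mul_add, add_mul, mul_smul_comm, smul_mul_assoc, mul_assoc, smul_add, smul_smul]
  push_cast
  module

theorem ncDerivative_dPow_mul_risePow {z : A} {μ : F} (hz : HasWeight h μ z) :
    ncDerivative (mk fun ℓ => dPow F e ℓ z * risePow h (1 : F) ℓ)
      = C (h * e) * (mk fun ℓ => dPow F e ℓ z * risePow h (1 : F) ℓ)
        - (mk fun ℓ => dPow F e ℓ z * risePow h (1 : F) ℓ) * C (h * e)
        - μ • (C e * mk fun ℓ => dPow F e ℓ z * risePow h (1 : F) ℓ) := by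
  ext ℓ
  rw [coeff_ncDerivative, map_sub, map_sub, coeff_C_mul, coeff_mul_C, coeff_smul, coeff_C_mul,
    coeff_mk, coeff_mk, h_mul_e_mul_dPow_mul_risePow he hz, ← Nat.cast_smul_eq_nsmul F,
    Nat.cast_succ, add_sub_cancel_left]

theorem vSer_mul_C_mul_uSer {z : A} {μ : F} (hz : HasWeight h μ z) :
    vSer h e (0 : F) * C z * uSer h e (0 : F) =
      oneSubEtNegPow e μ * mk fun ℓ => dPow F e ℓ z * risePow h (1 : F) ℓ := by
  have : IsAddTorsionFree A := .of_isTorsionFree F A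
  apply eq_of_ncDerivative_eq_commutator (c := h * e)
  · rw [ncDerivative_mul, ncDerivative_mul, ncDerivative_vSer he, ncDerivative_uSer he,
      ncDerivative_C]
    noncomm_ring
  · rw [ncDerivative_mul, ncDerivative_oneSubEtNegPow he, ncDerivative_dPow_mul_risePow he hz,
      C_mul_oneSubEtNegPow]
    simp only [add_mul, sub_mul, mul_sub, smul_mul_assoc, mul_smul_comm, mul_assoc]
    abel
  · simp [vSer, uSer, oneSubEtNegPow, dPow, risePow, fallPow, riseC]

end Series

theorem deformed_antipode_pow_general {F A : Type*} [Field F] [CharZero F] [Ring A] [Algebra F A]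
    (h e : A) (he : h * e - e * h = e)
    (y : A) (lam : F) (hy : h * y - y * h = lam • y) (s : ℕ) :
    vSer h e (0 : F) * PowerSeries.C (R := A) (y ^ s) * uSer h e (0 : F) =
      oneSubEtNegPow e ((s : F) * lam) *
        PowerSeries.mk (fun ℓ => dPow F e ℓ (y ^ s) * risePow h (1 : F) ℓ) :=
  vSer_mul_C_mul_uSer he (HasWeight.pow hy s)

/-- Deformed antipode of powers: if `he − eh = e` and `hy − yh = λ·y`, then for `s ≥ 1`,
`v · y^s · u = (1−et)^{−sλ} · Σ_{ℓ≥0} d^{(ℓ)}(y^s) h_1^{⟨ℓ⟩} t^ℓ` in `A[[t]]`,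
where `u = u_0` and `v = v_0 = u⁻¹`. -/
theorem deformed_antipode_pow {F A : Type*} [Field F] [CharZero F] [Ring A] [Algebra F A]
    (h e : A) (he : h * e - e * h = e)
    (y : A) (lam : F) (hy : h * y - y * h = lam • y) (s : ℕ) (hs : 1 ≤ s) :
    vSer h e (0 : F) * PowerSeries.C (R := A) (y ^ s) * uSer h e (0 : F) =
      oneSubEtNegPow e ((s : F) * lam) *
        PowerSeries.mk (fun ℓ => dPow F e ℓ (y ^ s) * risePow h (1 : F) ℓ) :=
  deformed_antipode_pow_general h e he y lam hy s
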